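/- arXiv:2401.02249 — 3 statements merged into one kernel-verified Lean document; each statement's English description precedes it below -/
import Mathlib

section
/- Let d ≥ 1, let Ω ⊆ ℝ^d be open and bounded, let v : ℝ^d → ℝ be continuously differentiable with compact support, and let X, X̃ : Ω → ℝ^d be differentiable maps with sup_{x∈Ω} |X(x) − X̃(x)| ≤ ε. Suppose there is κ > 0 such that for every α ∈ [0,1] the map H_α(x) = X(x) + α·(X̃(x) − X(x)) is injective on Ω and satisfies |det DH_α(x)| ≥ κ for every x ∈ Ω. Then ∫_Ω |v(X(x)) − v(X̃(x))|² dx ≤ ε²·κ^{−1}·∫_{ℝ^d} |∇v(y)|² dy. -/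
/-!
Along the segment from `X x` to `X̃ x` the fundamental theorem of calculus and Jensen's
inequality give `|v(X x) − v(X̃ x)|² ≤ ε² ∫₀¹ |∇v(H_t x)|² dt`. Integrating over `Ω`, swapping
the two integrals, and changing variables `y = H_t x` for each fixed `t` (legitimate since `H_t`
is injective, and costing a factor `κ⁻¹` since `|det DH_t| ≥ κ`) bounds the inner integral by
`κ⁻¹ ∫ |∇v|²`.
-/

open Set MeasureTheory

open scoped ENNReal

theorem sq_lintegral_le_lintegral_sq {α : Type*} [MeasurableSpace α] {μ : Measure α}
    [IsProbabilityMeasure μ] {f : α → ℝ≥0∞} (hf : AEMeasurable f μ) :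
    (∫⁻ a, f a ∂μ) ^ 2 ≤ ∫⁻ a, f a ^ 2 ∂μ := by
  have h := ENNReal.lintegral_mul_le_Lp_mul_Lq μ Real.HolderConjugate.two_two hf
    aemeasurable_const (g := fun _ => 1)
  simp only [Pi.mul_apply, mul_one, ENNReal.one_rpow, lintegral_const, measure_univ] at h
  simpa only [one_div, ENNReal.le_rpow_inv_iff two_pos, ENNReal.rpow_ofNat] using h

theorem integral_norm_sq_eq_toReal_lintegral_enorm_sq {α G : Type*} [MeasurableSpace α]
    {μ : Measure α} [NormedAddCommGroup G] {f : α → G} (hf : AEStronglyMeasurable f μ) :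
    ∫ a, ‖f a‖ ^ 2 ∂μ = (∫⁻ a, ‖f a‖ₑ ^ 2 ∂μ).toReal := by
  simpa using integral_norm_eq_lintegral_enorm (hf.norm.pow 2)

section

variable {E F : Type*} [NormedAddCommGroup E] [NormedSpace ℝ E]
  [NormedAddCommGroup F] [NormedSpace ℝ F]

theorem lintegral_enorm_fderiv_sq_ne_top [MeasurableSpace E] [OpensMeasurableSpace E]
    {μ : Measure E} [IsFiniteMeasureOnCompacts μ] {v : E → F} (hv : ContDiff ℝ 1 v)
    (hsupp : HasCompactSupport v) :
    ∫⁻ y, ‖fderiv ℝ v y‖ₑ ^ 2 ∂μ ≠ ∞ := by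
  have hDv : MemLp (fderiv ℝ v) 2 μ :=
    (hv.continuous_fderiv one_ne_zero).memLp_of_hasCompactSupport (hsupp.fderiv ℝ)
  simpa [HasFiniteIntegral] using (hDv.integrable_norm_pow two_ne_zero).hasFiniteIntegral.ne

variable [CompleteSpace F]

theorem enorm_sub_le_enorm_mul_lintegral_enorm_fderiv {v : E → F} (hv : ContDiff ℝ 1 v)
    (a b : E) :
    ‖v b - v a‖ₑ ≤ ‖b - a‖ₑ * ∫⁻ t in Ioc (0 : ℝ) 1, ‖fderiv ℝ v (a + t • (b - a))‖ₑ := by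
  have hderiv (t : ℝ) : HasDerivAt (fun t : ℝ => v (a + t • (b - a)))
      (fderiv ℝ v (a + t • (b - a)) (b - a)) t := by
    have hsegment : HasDerivAt (fun t : ℝ => a + t • (b - a)) (b - a) t := by
      simpa using ((hasDerivAt_id t).smul_const (b - a)).const_add a
    exact ((hv.differentiable one_ne_zero) _).hasFDerivAt.comp_hasDerivAt t hsegment
  have hDv : Continuous (fderiv ℝ v) := hv.continuous_fderiv one_ne_zero
  have hFTC : v b - v a = ∫ t in Ioc (0 : ℝ) 1, fderiv ℝ v (a + t • (b - a)) (b - a) := by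
    rw [← intervalIntegral.integral_of_le zero_le_one,
      intervalIntegral.integral_eq_sub_of_hasDerivAt (fun t _ => hderiv t)
        (Continuous.intervalIntegrable (by fun_prop) 0 1)]
    simp
  calc ‖v b - v a‖ₑ ≤ ∫⁻ t in Ioc (0 : ℝ) 1, ‖fderiv ℝ v (a + t • (b - a)) (b - a)‖ₑ :=
        hFTC ▸ enorm_integral_le_lintegral_enorm _
    _ ≤ ∫⁻ t in Ioc (0 : ℝ) 1, ‖b - a‖ₑ * ‖fderiv ℝ v (a + t • (b - a))‖ₑ :=
        lintegral_mono fun t => ((fderiv ℝ v _).le_opENorm _).trans_eq (mul_comm _ _)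
    _ = _ := lintegral_const_mul' _ _ enorm_ne_top

theorem enorm_sub_sq_le_enorm_sq_mul_lintegral_enorm_fderiv_sq {v : E → F}
    (hv : ContDiff ℝ 1 v) (a b : E) :
    ‖v b - v a‖ₑ ^ 2 ≤
      ‖b - a‖ₑ ^ 2 * ∫⁻ t in Ioc (0 : ℝ) 1, ‖fderiv ℝ v (a + t • (b - a))‖ₑ ^ 2 := by
  have : IsProbabilityMeasure (volume.restrict (Ioc (0 : ℝ) 1)) := ⟨by simp⟩
  calc ‖v b - v a‖ₑ ^ 2
      ≤ (‖b - a‖ₑ * ∫⁻ t in Ioc (0 : ℝ) 1, ‖fderiv ℝ v (a + t • (b - a))‖ₑ) ^ 2 := by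
        gcongr
        exact enorm_sub_le_enorm_mul_lintegral_enorm_fderiv hv a b
    _ ≤ _ := by
        rw [mul_pow]
        gcongr
        exact sq_lintegral_le_lintegral_sq
          ((hv.continuous_fderiv one_ne_zero).comp (by fun_prop)).enorm.aemeasurable

variable [FiniteDimensional ℝ E] [MeasurableSpace E] [BorelSpace E]
  (μ : Measure E) [μ.IsAddHaarMeasure]

theorem ofReal_mul_setLIntegral_comp_le_of_le_abs_det {s : Set E} (hs : MeasurableSet s)
    {f : E → E} {f' : E → E →L[ℝ] E} (hf' : ∀ x ∈ s, HasFDerivWithinAt f (f' x) s x)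
    (hf : InjOn f s) {κ : ℝ} (hdet : ∀ x ∈ s, κ ≤ |(f' x).det|) (g : E → ℝ≥0∞) :
    ENNReal.ofReal κ * ∫⁻ x in s, g (f x) ∂μ ≤ ∫⁻ y, g y ∂μ :=
  calc ENNReal.ofReal κ * ∫⁻ x in s, g (f x) ∂μ
      = ∫⁻ x in s, ENNReal.ofReal κ * g (f x) ∂μ :=
        (lintegral_const_mul' _ _ ENNReal.ofReal_ne_top).symm
    _ ≤ ∫⁻ x in s, ENNReal.ofReal |(f' x).det| * g (f x) ∂μ :=
        setLIntegral_mono' hs fun x hx => by gcongr; exact hdet x hx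
    _ = ∫⁻ y in f '' s, g y ∂μ :=
        (lintegral_image_eq_lintegral_abs_det_fderiv_mul μ hs hf' hf g).symm
    _ ≤ ∫⁻ y, g y ∂μ := setLIntegral_le_lintegral _ _

theorem ofReal_mul_setLIntegral_enorm_comp_sub_sq_le {s : Set E} (hs : MeasurableSet s)
    {v : E → F} (hv : ContDiff ℝ 1 v) {X Y : E → E}
    (hX : ∀ x ∈ s, DifferentiableAt ℝ X x) (hY : ∀ x ∈ s, DifferentiableAt ℝ Y x)
    {ε : ℝ} (hε : ∀ x ∈ s, ‖X x - Y x‖ ≤ ε) {κ : ℝ}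
    (hH : ∀ α ∈ Icc (0 : ℝ) 1, InjOn (fun x => X x + α • (Y x - X x)) s ∧
      ∀ x ∈ s, κ ≤ |LinearMap.det (fderiv ℝ (fun x => X x + α • (Y x - X x)) x).toLinearMap|) :
    ENNReal.ofReal κ * ∫⁻ x in s, ‖v (X x) - v (Y x)‖ₑ ^ 2 ∂μ
      ≤ ENNReal.ofReal (ε ^ 2) * ∫⁻ y, ‖fderiv ℝ v y‖ₑ ^ 2 ∂μ := by
  set G : E → ℝ≥0∞ := fun y => ‖fderiv ℝ v y‖ₑ ^ 2
  set H : E → ℝ → E := fun x t => X x + t • (Y x - X x)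
  have hG : Continuous G :=
    (ENNReal.continuous_pow 2).comp (hv.continuous_fderiv one_ne_zero).enorm
  have hsegment : ∀ x ∈ s, ‖v (X x) - v (Y x)‖ₑ ^ 2
      ≤ ENNReal.ofReal (ε ^ 2) * ∫⁻ t in Ioc (0 : ℝ) 1, G (H x t) := by
    intro x hx
    have hXY : ‖Y x - X x‖ₑ ^ 2 ≤ ENNReal.ofReal (ε ^ 2) := by
      rw [← ofReal_norm, ← ENNReal.ofReal_pow (norm_nonneg _), norm_sub_rev]
      exact ENNReal.ofReal_le_ofReal (pow_le_pow_left₀ (norm_nonneg _) (hε x hx) 2)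
    rw [enorm_sub_rev]
    exact (enorm_sub_sq_le_enorm_sq_mul_lintegral_enorm_fderiv_sq hv _ _).trans (by gcongr)
  have hslice : ∀ t ∈ Ioc (0 : ℝ) 1,
      ENNReal.ofReal κ * ∫⁻ x in s, G (H x t) ∂μ ≤ ∫⁻ y, G y ∂μ := by
    intro t ht
    obtain ⟨hinj, hdet⟩ := hH t (Ioc_subset_Icc_self ht)
    have hHt : ∀ x ∈ s, DifferentiableAt ℝ (fun x => H x t) x := fun x hx =>
      (hX x hx).add (((hY x hx).sub (hX x hx)).const_smul t)
    exact ofReal_mul_setLIntegral_comp_le_of_le_abs_det μ hs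
      (fun x hx => (hHt x hx).hasFDerivAt.hasFDerivWithinAt) hinj hdet G
  have hmeas : AEMeasurable (Function.uncurry fun x t => G (H x t))
      ((μ.restrict s).prod (volume.restrict (Ioc (0 : ℝ) 1))) := by
    have hXc : ContinuousOn X s := fun x hx => (hX x hx).continuousAt.continuousWithinAt
    have hYc : ContinuousOn Y s := fun x hx => (hY x hx).continuousAt.continuousWithinAt
    have hXc' : ContinuousOn (fun p : E × ℝ => X p.1) (s ×ˢ Ioc 0 1) :=
      hXc.comp continuousOn_fst fun p hp => hp.1
    have hYc' : ContinuousOn (fun p : E × ℝ => Y p.1) (s ×ˢ Ioc 0 1) :=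
      hYc.comp continuousOn_fst fun p hp => hp.1
    rw [Measure.prod_restrict]
    exact (hG.comp_continuousOn (hXc'.add (continuousOn_snd.smul (hYc'.sub hXc')))).aemeasurable
      (hs.prod measurableSet_Ioc)
  calc ENNReal.ofReal κ * ∫⁻ x in s, ‖v (X x) - v (Y x)‖ₑ ^ 2 ∂μ
      ≤ ENNReal.ofReal κ * ∫⁻ x in s, ENNReal.ofReal (ε ^ 2) *
          (∫⁻ t in Ioc (0 : ℝ) 1, G (H x t)) ∂μ := by
        gcongr ENNReal.ofReal κ * ?_
        exact setLIntegral_mono' hs hsegment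
    _ = ENNReal.ofReal (ε ^ 2) *
          ∫⁻ t in Ioc (0 : ℝ) 1, ENNReal.ofReal κ * ∫⁻ x in s, G (H x t) ∂μ := by
        rw [lintegral_const_mul' _ _ ENNReal.ofReal_ne_top, lintegral_lintegral_swap hmeas,
          lintegral_const_mul' _ _ ENNReal.ofReal_ne_top, mul_left_comm]
    _ ≤ ENNReal.ofReal (ε ^ 2) * ∫⁻ t in Ioc (0 : ℝ) 1, ∫⁻ y, G y ∂μ := by
        gcongr ENNReal.ofReal (ε ^ 2) * ?_
        exact setLIntegral_mono' measurableSet_Ioc hslice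
    _ = ENNReal.ofReal (ε ^ 2) * ∫⁻ y, G y ∂μ := by simp

end

theorem sq_integral_comp_flow_difference_le_general
    {d : ℕ} (Ω : Set (EuclideanSpace ℝ (Fin d)))
    (hΩo : IsOpen Ω)
    (v : EuclideanSpace ℝ (Fin d) → ℝ)
    (hv : ContDiff ℝ 1 v) (hvsupp : HasCompactSupport v)
    (X Xt : EuclideanSpace ℝ (Fin d) → EuclideanSpace ℝ (Fin d))
    (hXdiff : ∀ x ∈ Ω, DifferentiableAt ℝ X x)
    (hXtdiff : ∀ x ∈ Ω, DifferentiableAt ℝ Xt x)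
    (ε : ℝ) (hε : ∀ x ∈ Ω, ‖X x - Xt x‖ ≤ ε)
    (κ : ℝ) (hκ : 0 < κ)
    (hH : ∀ α ∈ Set.Icc (0 : ℝ) 1,
      Set.InjOn (fun x => X x + α • (Xt x - X x)) Ω ∧
      ∀ x ∈ Ω,
        κ ≤ |LinearMap.det (fderiv ℝ (fun x => X x + α • (Xt x - X x)) x).toLinearMap|) :
    ∫ x in Ω, |v (X x) - v (Xt x)| ^ 2 ≤ ε ^ 2 * κ⁻¹ * ∫ y, ‖gradient v y‖ ^ 2 := by
  have hXc : ContinuousOn X Ω := fun x hx => (hXdiff x hx).continuousAt.continuousWithinAt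
  have hXtc : ContinuousOn Xt Ω := fun x hx => (hXtdiff x hx).continuousAt.continuousWithinAt
  have hvX : ContinuousOn (fun x => v (X x) - v (Xt x)) Ω :=
    (hv.continuous.comp_continuousOn hXc).sub (hv.continuous.comp_continuousOn hXtc)
  have hLHS : ∫ x in Ω, |v (X x) - v (Xt x)| ^ 2
      = (∫⁻ x in Ω, ‖v (X x) - v (Xt x)‖ₑ ^ 2).toReal := by
    simp only [← Real.norm_eq_abs]
    exact integral_norm_sq_eq_toReal_lintegral_enorm_sq
      (hvX.aestronglyMeasurable hΩo.measurableSet)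
  have hRHS : ∫ y, ‖gradient v y‖ ^ 2 = (∫⁻ y, ‖fderiv ℝ v y‖ₑ ^ 2).toReal := by
    have hgrad (y : EuclideanSpace ℝ (Fin d)) : ‖gradient v y‖ = ‖fderiv ℝ v y‖ := by
      rw [← toDual_gradient, LinearIsometryEquiv.norm_map]
    simp only [hgrad]
    exact integral_norm_sq_eq_toReal_lintegral_enorm_sq
      (hv.continuous_fderiv one_ne_zero).aestronglyMeasurable
  have key := ENNReal.toReal_mono
    (ENNReal.mul_ne_top ENNReal.ofReal_ne_top (lintegral_enorm_fderiv_sq_ne_top hv hvsupp))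
    (ofReal_mul_setLIntegral_enorm_comp_sub_sq_le volume hΩo.measurableSet hv hXdiff hXtdiff
      hε hH)
  rw [ENNReal.toReal_mul, ENNReal.toReal_mul, ENNReal.toReal_ofReal hκ.le,
    ENNReal.toReal_ofReal (sq_nonneg ε), ← hLHS, ← hRHS] at key
  rwa [mul_comm (ε ^ 2), mul_assoc, le_inv_mul_iff₀ hκ]

/-- **L² estimate for the difference of compositions with two nearby flow maps.**
If `v` is `C¹` with compact support, `X` and `Xt = X̃` are differentiable on the bounded
open set `Ω` with `sup_Ω ‖X − X̃‖ ≤ ε`, and every interpolated map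
`H_α = X + α(X̃ − X)` (`α ∈ [0,1]`) is injective on `Ω` with Jacobian determinant of
absolute value `≥ κ > 0`, then
`∫_Ω |v(X x) − v(X̃ x)|² dx ≤ ε²·κ⁻¹·∫_{ℝ^d} |∇v(y)|² dy`. -/
theorem sq_integral_comp_flow_difference_le
    {d : ℕ} (hd : 1 ≤ d) (Ω : Set (EuclideanSpace ℝ (Fin d)))
    (hΩo : IsOpen Ω) (hΩb : Bornology.IsBounded Ω)
    (v : EuclideanSpace ℝ (Fin d) → ℝ)
    (hv : ContDiff ℝ 1 v) (hvsupp : HasCompactSupport v)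
    (X Xt : EuclideanSpace ℝ (Fin d) → EuclideanSpace ℝ (Fin d))
    (hXdiff : ∀ x ∈ Ω, DifferentiableAt ℝ X x)
    (hXtdiff : ∀ x ∈ Ω, DifferentiableAt ℝ Xt x)
    (ε : ℝ) (hε : ∀ x ∈ Ω, ‖X x - Xt x‖ ≤ ε)
    (κ : ℝ) (hκ : 0 < κ)
    (hH : ∀ α ∈ Set.Icc (0 : ℝ) 1,
      Set.InjOn (fun x => X x + α • (Xt x - X x)) Ω ∧
      ∀ x ∈ Ω,
        κ ≤ |LinearMap.det (fderiv ℝ (fun x => X x + α • (Xt x - X x)) x).toLinearMap|) :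
    ∫ x in Ω, |v (X x) - v (Xt x)| ^ 2 ≤ ε ^ 2 * κ⁻¹ * ∫ y, ‖gradient v y‖ ^ 2 :=
  sq_integral_comp_flow_difference_le_general Ω hΩo v hv hvsupp X Xt hXdiff hXtdiff ε hε κ hκ hH
end

section
/- Let d ≥ 1, let T̂ ⊆ ℝ^d be a convex set, let B : ℝ^d → ℝ^d be an invertible linear map, b ∈ ℝ^d, c ∈ [0,1), and let Θ : ℝ^d → ℝ^d be differentiable on T̂ with ‖DΘ(x̂) ∘ B^{−1}‖ ≤ c for every x̂ ∈ T̂, where ‖·‖ is the operator norm. Define F(x̂) = B·x̂ + b + Θ(x̂), so that DF(x̂) = B + DΘ(x̂). Then for every x̂ ∈ T̂ the linear map DF(x̂) is invertible and (1 − c)^d·|det B| ≤ |det DF(x̂)| ≤ (1 + c)^d·|det B|. -/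
/-! Writing `B + DΘ x = (1 + A) ∘ B` with `A = DΘ x ∘ B⁻¹`, the determinant factors as
`det (1 + A) · det B`, and `‖A‖ ≤ c` means that `1 + A` stretches every vector by a factor between
`1 - c` and `1 + c`. Hence `1 + A` maps the unit ball into the closed ball of radius `1 + c` and
onto a superset of the ball of radius `1 - c`; since it scales Haar measure by `|det (1 + A)|`,
this gives `(1 - c)^d ≤ |det (1 + A)| ≤ (1 + c)^d`. -/

open MeasureTheory Metric Module

namespace ContinuousLinearMap

variable {E : Type*} [NormedAddCommGroup E] [NormedSpace ℝ E]

lemma norm_one_add_le {A : E →L[ℝ] E} {c : ℝ} (hA : ‖A‖ ≤ c) : ‖1 + A‖ ≤ 1 + c :=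
  (norm_add_le _ _).trans (add_le_add norm_id_le hA)

lemma sub_mul_norm_le_norm_one_add_apply {A : E →L[ℝ] E} {c : ℝ} (hA : ‖A‖ ≤ c) (v : E) :
    (1 - c) * ‖v‖ ≤ ‖(1 + A) v‖ := by
  have hAv : ‖A v‖ ≤ c * ‖v‖ := A.le_of_opNorm_le hA v
  have := norm_sub_norm_le v (-A v)
  rw [norm_neg, sub_neg_eq_add] at this
  rw [add_apply, one_apply_eq_self]
  linarith

variable [FiniteDimensional ℝ E]

lemma le_of_ofReal_mul_addHaar_unitBall_le [MeasurableSpace E] [BorelSpace E]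
    (μ : Measure E) [μ.IsAddHaarMeasure] {a b : ℝ} (hb : 0 ≤ b)
    (h : ENNReal.ofReal a * μ (ball 0 1) ≤ ENNReal.ofReal b * μ (ball 0 1)) : a ≤ b := by
  rw [ENNReal.mul_le_mul_iff_left (measure_ball_pos μ 0 one_pos).ne' measure_ball_lt_top.ne,
    ENNReal.ofReal_le_ofReal_iff hb] at h
  exact h

lemma bijective_of_mul_norm_le_norm_apply (f : E →L[ℝ] E) {m : ℝ} (hm : 0 < m)
    (h : ∀ v, m * ‖v‖ ≤ ‖f v‖) : Function.Bijective f := by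
  have hinj : Function.Injective f := by
    refine (injective_iff_map_eq_zero f).2 fun v hv => norm_le_zero_iff.1 ?_
    have := h v
    rw [hv, norm_zero] at this
    nlinarith [norm_nonneg v]
  exact ⟨hinj, LinearMap.injective_iff_surjective.1 hinj⟩

theorem abs_det_le_opNorm_pow (f : E →L[ℝ] E) :
    |LinearMap.det (f : E →ₗ[ℝ] E)| ≤ ‖f‖ ^ finrank ℝ E := by
  borelize E
  let μ : Measure E := Measure.addHaar
  have himage : f '' ball 0 1 ⊆ closedBall 0 ‖f‖ := by
    rintro - ⟨v, hv, rfl⟩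
    rw [mem_ball_zero_iff] at hv
    rw [mem_closedBall_zero_iff]
    exact f.le_of_opNorm_le_of_le le_rfl hv.le |>.trans_eq (mul_one _)
  refine le_of_ofReal_mul_addHaar_unitBall_le μ (by positivity) ?_
  rw [← Measure.addHaar_image_continuousLinearMap,
    ← Measure.addHaar_closedBall μ 0 (norm_nonneg f)]
  exact measure_mono himage

theorem pow_le_abs_det_of_mul_norm_le_norm_apply (f : E →L[ℝ] E) {m : ℝ} (hm : 0 < m)
    (h : ∀ v, m * ‖v‖ ≤ ‖f v‖) : m ^ finrank ℝ E ≤ |LinearMap.det (f : E →ₗ[ℝ] E)| := by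
  borelize E
  let μ : Measure E := Measure.addHaar
  have himage : ball 0 m ⊆ f '' ball 0 1 := by
    intro w hw
    obtain ⟨v, rfl⟩ := (bijective_of_mul_norm_le_norm_apply f hm h).2 w
    refine ⟨v, ?_, rfl⟩
    rw [mem_ball_zero_iff] at hw ⊢
    nlinarith [h v]
  refine le_of_ofReal_mul_addHaar_unitBall_le μ (abs_nonneg _) ?_
  rw [← Measure.addHaar_image_continuousLinearMap, ← Measure.addHaar_ball_of_pos μ 0 hm]
  exact measure_mono himage

end ContinuousLinearMap

theorem curved_simplex_map_jacobian_det_bounds_general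
    {d : ℕ}
    (Tref : Set (EuclideanSpace ℝ (Fin d)))
    (B : EuclideanSpace ℝ (Fin d) ≃L[ℝ] EuclideanSpace ℝ (Fin d))
    (c : ℝ) (hc1 : c < 1)
    (DΘ : EuclideanSpace ℝ (Fin d) →
      (EuclideanSpace ℝ (Fin d) →L[ℝ] EuclideanSpace ℝ (Fin d)))
    (hDΘ : ∀ x ∈ Tref,
      ‖(DΘ x).comp (B.symm : EuclideanSpace ℝ (Fin d) →L[ℝ] EuclideanSpace ℝ (Fin d))‖ ≤ c) :
    ∀ x ∈ Tref,
      Function.Bijective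
        ⇑((B : EuclideanSpace ℝ (Fin d) →L[ℝ] EuclideanSpace ℝ (Fin d)) + DΘ x) ∧
      (1 - c) ^ d *
          |LinearMap.det
            (B : EuclideanSpace ℝ (Fin d) →L[ℝ] EuclideanSpace ℝ (Fin d)).toLinearMap| ≤
        |LinearMap.det
          ((B : EuclideanSpace ℝ (Fin d) →L[ℝ] EuclideanSpace ℝ (Fin d)) +
            DΘ x).toLinearMap| ∧
      |LinearMap.det
          ((B : EuclideanSpace ℝ (Fin d) →L[ℝ] EuclideanSpace ℝ (Fin d)) +
            DΘ x).toLinearMap| ≤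
        (1 + c) ^ d *
          |LinearMap.det
            (B : EuclideanSpace ℝ (Fin d) →L[ℝ] EuclideanSpace ℝ (Fin d)).toLinearMap| := by
  intro x hx
  set A := (DΘ x).comp (B.symm : EuclideanSpace ℝ (Fin d) →L[ℝ] EuclideanSpace ℝ (Fin d))
  set L := (B : EuclideanSpace ℝ (Fin d) →L[ℝ] EuclideanSpace ℝ (Fin d))
  have hA : ‖A‖ ≤ c := hDΘ x hx
  have hc : 0 < 1 - c := sub_pos.2 hc1
  have hstretch := ContinuousLinearMap.sub_mul_norm_le_norm_one_add_apply hA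
  have hfactor : L + DΘ x = (1 + A).comp L := by
    ext v; simp [A, L]
  have hdet : |LinearMap.det (L + DΘ x).toLinearMap| =
      |LinearMap.det (1 + A).toLinearMap| * |LinearMap.det L.toLinearMap| := by
    rw [hfactor, ContinuousLinearMap.toLinearMap_comp, LinearMap.det_comp, abs_mul]
  have hlower := ContinuousLinearMap.pow_le_abs_det_of_mul_norm_le_norm_apply (1 + A) hc hstretch
  have hupper := (ContinuousLinearMap.abs_det_le_opNorm_pow (1 + A)).trans
    (pow_le_pow_left₀ (norm_nonneg _) (ContinuousLinearMap.norm_one_add_le hA) _)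
  rw [finrank_euclideanSpace_fin] at hlower hupper
  refine ⟨?_, by rw [hdet]; gcongr, by rw [hdet]; gcongr⟩
  rw [hfactor, ContinuousLinearMap.coe_comp]
  exact (ContinuousLinearMap.bijective_of_mul_norm_le_norm_apply _ hc hstretch).comp B.bijective

/-- **Jacobian determinant bounds for a perturbed affine map (curved simplices).**
If `F(x̂) = B·x̂ + b + Θ(x̂)` with `B` invertible and `Θ` differentiable on the convex
set `T̂` with `‖DΘ(x̂) ∘ B⁻¹‖ ≤ c < 1`, so that `DF(x̂) = B + DΘ(x̂)`, then for every
`x̂ ∈ T̂` the map `DF(x̂)` is invertible and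
`(1 − c)^d·|det B| ≤ |det DF(x̂)| ≤ (1 + c)^d·|det B|`. -/
theorem curved_simplex_map_jacobian_det_bounds
    {d : ℕ} (hd : 1 ≤ d)
    (Tref : Set (EuclideanSpace ℝ (Fin d))) (hconv : Convex ℝ Tref)
    (B : EuclideanSpace ℝ (Fin d) ≃L[ℝ] EuclideanSpace ℝ (Fin d))
    (b : EuclideanSpace ℝ (Fin d)) (c : ℝ) (hc0 : 0 ≤ c) (hc1 : c < 1)
    (Θ : EuclideanSpace ℝ (Fin d) → EuclideanSpace ℝ (Fin d))
    (DΘ : EuclideanSpace ℝ (Fin d) →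
      (EuclideanSpace ℝ (Fin d) →L[ℝ] EuclideanSpace ℝ (Fin d)))
    (hΘ : ∀ x ∈ Tref, HasFDerivWithinAt Θ (DΘ x) Tref x)
    (hDΘ : ∀ x ∈ Tref,
      ‖(DΘ x).comp (B.symm : EuclideanSpace ℝ (Fin d) →L[ℝ] EuclideanSpace ℝ (Fin d))‖ ≤ c) :
    ∀ x ∈ Tref,
      Function.Bijective
        ⇑((B : EuclideanSpace ℝ (Fin d) →L[ℝ] EuclideanSpace ℝ (Fin d)) + DΘ x) ∧
      (1 - c) ^ d *
          |LinearMap.det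
            (B : EuclideanSpace ℝ (Fin d) →L[ℝ] EuclideanSpace ℝ (Fin d)).toLinearMap| ≤
        |LinearMap.det
          ((B : EuclideanSpace ℝ (Fin d) →L[ℝ] EuclideanSpace ℝ (Fin d)) +
            DΘ x).toLinearMap| ∧
      |LinearMap.det
          ((B : EuclideanSpace ℝ (Fin d) →L[ℝ] EuclideanSpace ℝ (Fin d)) +
            DΘ x).toLinearMap| ≤
        (1 + c) ^ d *
          |LinearMap.det
            (B : EuclideanSpace ℝ (Fin d) →L[ℝ] EuclideanSpace ℝ (Fin d)).toLinearMap| :=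
  curved_simplex_map_jacobian_det_bounds_general Tref B c hc1 DΘ hDΘ
end

section
/- Let d ≥ 1, let T̂ ⊆ ℝ^d be a compact convex set with positive Lebesgue measure, let B : ℝ^d → ℝ^d be an invertible linear map, b ∈ ℝ^d, c ∈ [0,1), and let Θ : ℝ^d → ℝ^d be continuously differentiable on an open set containing T̂ with ‖DΘ(x̂) ∘ B^{−1}‖ ≤ c for every x̂ ∈ T̂. Define F(x̂) = B·x̂ + b + Θ(x̂) and T = F(T̂). Then sup_{x̂∈T̂} |det DF(x̂)| ≤ (1/meas(T̂))·((1 + c)/(1 − c))^d·meas(T), where meas denotes Lebesgue measure on ℝ^d. -/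
open Set MeasureTheory Module

/-!
Write `DF = (1 + DΘ ∘ B⁻¹) ∘ B` with `‖DΘ ∘ B⁻¹‖ ≤ c`. Since `|det f| ≤ ‖f‖ᵈ` (compare the
volumes of the unit ball and of its image) and `‖(1 + t)⁻¹‖ ≤ (1 - c)⁻¹` (Neumann series),
`(1 - c)ᵈ |det B| ≤ |det DF| ≤ (1 + c)ᵈ |det B|` on `T̂`. On the convex set `B(T̂)` the map
`Θ ∘ B⁻¹` is a `c`-contraction, so `F` is injective on `T̂`, and the change of variables
inequality yields `(1 - c)ᵈ |det B| meas T̂ ≤ meas T`. The two bounds combine to the claim.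
-/

section Determinant

variable {E : Type*} [NormedAddCommGroup E] [NormedSpace ℝ E]

theorem ContinuousLinearEquiv.det_add (A : E ≃L[ℝ] E) (t : E →L[ℝ] E) :
    ((A : E →L[ℝ] E) + t).det =
      (1 + t.comp (A.symm : E →L[ℝ] E)).det * (A : E →L[ℝ] E).det := by
  have : (A : E →L[ℝ] E) + t = (1 + t.comp (A.symm : E →L[ℝ] E)).comp (A : E →L[ℝ] E) := by
    ext x
    simp
  rw [this, ContinuousLinearMap.det, ContinuousLinearMap.toLinearMap_comp, LinearMap.det_comp]

variable [FiniteDimensional ℝ E]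

-- `f` maps the unit ball into the ball of radius `‖f‖`; compare their Haar measures.
theorem ContinuousLinearMap.abs_det_le_norm_pow (f : E →L[ℝ] E) :
    |f.det| ≤ ‖f‖ ^ finrank ℝ E := by
  borelize E
  let μ : Measure E := Measure.addHaar
  have hball_pos : 0 < μ (Metric.ball 0 1) := Metric.measure_ball_pos _ _ one_pos
  have hball_fin : μ (Metric.ball 0 1) ≠ ⊤ := measure_ball_lt_top.ne
  have hmaps : f '' Metric.closedBall 0 1 ⊆ Metric.closedBall 0 ‖f‖ := by
    rintro _ ⟨x, hx, rfl⟩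
    rw [mem_closedBall_zero_iff] at hx ⊢
    simpa using f.le_opNorm_of_le hx
  have key : ENNReal.ofReal |f.det| * μ (Metric.ball 0 1)
      ≤ ENNReal.ofReal (‖f‖ ^ finrank ℝ E) * μ (Metric.ball 0 1) :=
    calc ENNReal.ofReal |f.det| * μ (Metric.ball 0 1)
        = μ (f '' Metric.closedBall 0 1) := by
          rw [Measure.addHaar_image_continuousLinearMap,
            Measure.addHaar_closedBall _ _ zero_le_one, one_pow, ENNReal.ofReal_one, one_mul]
      _ ≤ μ (Metric.closedBall 0 ‖f‖) := measure_mono hmaps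
      _ = ENNReal.ofReal (‖f‖ ^ finrank ℝ E) * μ (Metric.ball 0 1) :=
          Measure.addHaar_closedBall _ _ (norm_nonneg f)
  exact (ENNReal.ofReal_le_ofReal_iff (by positivity)).mp
    ((ENNReal.mul_le_mul_iff_left hball_pos.ne' hball_fin).mp key)

theorem ContinuousLinearMap.one_le_abs_det_mul_norm_inv_pow (u : (E →L[ℝ] E)ˣ) :
    1 ≤ |(u : E →L[ℝ] E).det| * ‖(↑u⁻¹ : E →L[ℝ] E)‖ ^ finrank ℝ E := by
  have hdet : (u : E →L[ℝ] E).det * (↑u⁻¹ : E →L[ℝ] E).det = 1 := by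
    rw [ContinuousLinearMap.det, ContinuousLinearMap.det, ← LinearMap.det_comp,
      ← ContinuousLinearMap.toLinearMap_comp, ← ContinuousLinearMap.mul_def, u.mul_inv]
    exact LinearMap.det_id
  calc (1 : ℝ) = |(u : E →L[ℝ] E).det| * |(↑u⁻¹ : E →L[ℝ] E).det| := by
        rw [← abs_mul, hdet, abs_one]
    _ ≤ |(u : E →L[ℝ] E).det| * ‖(↑u⁻¹ : E →L[ℝ] E)‖ ^ finrank ℝ E :=
        mul_le_mul_of_nonneg_left (abs_det_le_norm_pow _) (abs_nonneg _)

theorem ContinuousLinearMap.one_sub_pow_le_abs_det_one_add {t : E →L[ℝ] E} {c : ℝ}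
    (ht : ‖t‖ ≤ c) (hc : c < 1) :
    (1 - c) ^ finrank ℝ E ≤ |(1 + t).det| := by
  have hnt : ‖-t‖ < 1 := by rw [norm_neg]; linarith
  let u := Units.oneSub (-t) hnt
  have hu : (u : E →L[ℝ] E) = 1 + t := by rw [Units.val_oneSub, sub_neg_eq_add]
  -- `u⁻¹` is the Neumann series `∑ (-t)ⁿ`.
  have hinv : ‖(↑u⁻¹ : E →L[ℝ] E)‖ ≤ (1 - c)⁻¹ :=
    calc ‖(↑u⁻¹ : E →L[ℝ] E)‖ ≤ ‖(1 : E →L[ℝ] E)‖ - 1 + (1 - ‖-t‖)⁻¹ :=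
          tsum_geometric_le_of_norm_lt_one (-t) hnt
      _ ≤ (1 - c)⁻¹ := by
          rw [norm_neg]
          have h1 : ‖(1 : E →L[ℝ] E)‖ ≤ 1 := ContinuousLinearMap.norm_id_le
          have := inv_anti₀ (by linarith) (by linarith : 1 - c ≤ 1 - ‖t‖)
          linarith
  have hpos : 0 < (1 - c) ^ finrank ℝ E := pow_pos (by linarith) _
  have key := (one_le_abs_det_mul_norm_inv_pow u).trans
    (mul_le_mul_of_nonneg_left (pow_le_pow_left₀ (norm_nonneg _) hinv _) (abs_nonneg _))
  rw [inv_pow, ← div_eq_mul_inv, one_le_div hpos, hu] at key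
  exact key

variable {A : E ≃L[ℝ] E} {t : E →L[ℝ] E} {c : ℝ}

theorem ContinuousLinearEquiv.abs_det_add_le (ht : ‖t.comp (A.symm : E →L[ℝ] E)‖ ≤ c) :
    |((A : E →L[ℝ] E) + t).det| ≤ (1 + c) ^ finrank ℝ E * |(A : E →L[ℝ] E).det| := by
  rw [A.det_add, abs_mul]
  refine mul_le_mul_of_nonneg_right ?_ (abs_nonneg _)
  refine (ContinuousLinearMap.abs_det_le_norm_pow _).trans
    (pow_le_pow_left₀ (norm_nonneg _) ?_ _)
  exact (norm_add_le _ _).trans (add_le_add ContinuousLinearMap.norm_id_le ht)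

theorem ContinuousLinearEquiv.one_sub_pow_mul_abs_det_le
    (ht : ‖t.comp (A.symm : E →L[ℝ] E)‖ ≤ c) (hc : c < 1) :
    (1 - c) ^ finrank ℝ E * |(A : E →L[ℝ] E).det| ≤ |((A : E →L[ℝ] E) + t).det| := by
  rw [A.det_add, abs_mul]
  exact mul_le_mul_of_nonneg_right
    (ContinuousLinearMap.one_sub_pow_le_abs_det_one_add ht hc) (abs_nonneg _)

end Determinant

-- In the coordinates `y = A x` the perturbation `Θ ∘ A⁻¹` is a `c`-contraction.
theorem Convex.injOn_add_add_of_norm_comp_symm_le {E : Type*} [NormedAddCommGroup E]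
    [NormedSpace ℝ E] {s : Set E} (hs : Convex ℝ s) (A : E ≃L[ℝ] E) (b : E) {Θ : E → E}
    {Θ' : E → E →L[ℝ] E} {c : ℝ} (hc : c < 1)
    (hΘ : ∀ x ∈ s, HasFDerivWithinAt Θ (Θ' x) s x)
    (hbound : ∀ x ∈ s, ‖(Θ' x).comp (A.symm : E →L[ℝ] E)‖ ≤ c) :
    InjOn (fun z => A z + b + Θ z) s := by
  have hG : ∀ y ∈ A '' s, HasFDerivWithinAt (Θ ∘ A.symm)
      ((Θ' (A.symm y)).comp (A.symm : E →L[ℝ] E)) (A '' s) y := by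
    rintro _ ⟨x, hx, rfl⟩
    have hΘx : HasFDerivWithinAt Θ (Θ' (A.symm (A x))) s (A.symm (A x)) := by
      simpa using hΘ x hx
    refine hΘx.comp (A x) A.symm.hasFDerivAt.hasFDerivWithinAt ?_
    rintro _ ⟨z, hz, rfl⟩
    simpa using hz
  have hG' : ∀ y ∈ A '' s, ‖(Θ' (A.symm y)).comp (A.symm : E →L[ℝ] E)‖ ≤ c := by
    rintro _ ⟨x, hx, rfl⟩
    simpa using hbound x hx
  intro x₁ hx₁ x₂ hx₂ heq
  have hdiff : A x₁ - A x₂ = Θ x₂ - Θ x₁ := by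
    linear_combination (norm := module) heq
  have hcontr : ‖A x₁ - A x₂‖ ≤ c * ‖A x₁ - A x₂‖ := by
    have := (hs.linear_image A.toLinearMap).norm_image_sub_le_of_norm_hasFDerivWithin_le
      hG hG' (mem_image_of_mem _ hx₁) (mem_image_of_mem _ hx₂)
    simpa [hdiff, norm_sub_rev] using this
  have hzero : ‖A x₁ - A x₂‖ = 0 := by nlinarith [norm_nonneg (A x₁ - A x₂)]
  exact A.injective (sub_eq_zero.mp (norm_eq_zero.mp hzero))

theorem MeasureTheory.Measure.ofReal_mul_le_addHaar_image {E : Type*} [NormedAddCommGroup E]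
    [NormedSpace ℝ E] [FiniteDimensional ℝ E] [MeasurableSpace E] [BorelSpace E]
    (μ : Measure E) [μ.IsAddHaarMeasure] {s : Set E} {f : E → E} {f' : E → E →L[ℝ] E} {m : ℝ}
    (hs : MeasurableSet s) (hf' : ∀ x ∈ s, HasFDerivWithinAt f (f' x) s x) (hf : InjOn f s)
    (hm : ∀ x ∈ s, m ≤ |(f' x).det|) :
    ENNReal.ofReal m * μ s ≤ μ (f '' s) :=
  calc ENNReal.ofReal m * μ s = ∫⁻ _ in s, ENNReal.ofReal m ∂μ :=
        (setLIntegral_const _ _).symm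
    _ ≤ ∫⁻ x in s, ENNReal.ofReal |(f' x).det| ∂μ :=
        setLIntegral_mono' hs fun x hx => ENNReal.ofReal_le_ofReal (hm x hx)
    _ ≤ μ (f '' s) := lintegral_abs_det_fderiv_le_addHaar_image μ hs hf' hf

theorem le_inv_mul_div_pow_mul_of_le {a K v M c : ℝ} {n : ℕ} (hc0 : 0 ≤ c) (hc1 : c < 1)
    (hv : 0 < v) (ha : a ≤ (1 + c) ^ n * K) (hM : (1 - c) ^ n * K * v ≤ M) :
    a ≤ v⁻¹ * ((1 + c) / (1 - c)) ^ n * M := by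
  have h1c : 0 < 1 - c := by linarith
  calc a ≤ (1 + c) ^ n * K := ha
    _ = ((1 + c) / (1 - c)) ^ n * ((1 - c) ^ n * K) := by
        rw [div_pow]; field_simp
    _ ≤ ((1 + c) / (1 - c)) ^ n * (M / v) := by
        gcongr
        rwa [le_div_iff₀ hv]
    _ = v⁻¹ * ((1 + c) / (1 - c)) ^ n * M := by ring

theorem curved_simplex_jacobian_sup_le_measure_ratio_general
    {d : ℕ}
    (Tref : Set (EuclideanSpace ℝ (Fin d)))
    (hcomp : IsCompact Tref) (hconv : Convex ℝ Tref)
    (hmeas : 0 < volume Tref)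
    (B : EuclideanSpace ℝ (Fin d) ≃L[ℝ] EuclideanSpace ℝ (Fin d))
    (b : EuclideanSpace ℝ (Fin d)) (c : ℝ) (hc1 : c < 1)
    (Θ : EuclideanSpace ℝ (Fin d) → EuclideanSpace ℝ (Fin d))
    (U : Set (EuclideanSpace ℝ (Fin d))) (hUo : IsOpen U) (hTU : Tref ⊆ U)
    (hΘ : ContDiffOn ℝ 1 Θ U)
    (hDΘ : ∀ x ∈ Tref,
      ‖(fderiv ℝ Θ x).comp
        (B.symm : EuclideanSpace ℝ (Fin d) →L[ℝ] EuclideanSpace ℝ (Fin d))‖ ≤ c) :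
    ∀ x ∈ Tref,
      |LinearMap.det (fderiv ℝ (fun z => B z + b + Θ z) x).toLinearMap| ≤
        (volume Tref).toReal⁻¹ * ((1 + c) / (1 - c)) ^ d *
          (volume ((fun z => B z + b + Θ z) '' Tref)).toReal := by
  intro x hx
  set F := fun z => B z + b + Θ z
  have hΘ' : ∀ y ∈ Tref, HasFDerivAt Θ (fderiv ℝ Θ y) y := fun y hy =>
    ((hΘ.differentiableOn one_ne_zero y (hTU hy)).differentiableAt
      (hUo.mem_nhds (hTU hy))).hasFDerivAt
  have hF : ∀ y ∈ Tref, HasFDerivAt F ((B : _ →L[ℝ] _) + fderiv ℝ Θ y) y := fun y hy =>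
    (B.hasFDerivAt.add_const b).add (hΘ' y hy)
  have hc0 : 0 ≤ c := (norm_nonneg _).trans (hDΘ x hx)
  have hvol : (1 - c) ^ d * |(B : EuclideanSpace ℝ (Fin d) →L[ℝ] _).det| *
      (volume Tref).toReal ≤ (volume (F '' Tref)).toReal := by
    have hinj : InjOn F Tref := hconv.injOn_add_add_of_norm_comp_symm_le B b hc1
      (fun y hy => (hΘ' y hy).hasFDerivWithinAt) hDΘ
    have hlow := volume.ofReal_mul_le_addHaar_image hcomp.isClosed.measurableSet
      (fun y hy => (hF y hy).hasFDerivWithinAt) hinj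
      (fun y hy => ContinuousLinearEquiv.one_sub_pow_mul_abs_det_le (hDΘ y hy) hc1)
    have himage_fin : volume (F '' Tref) ≠ ⊤ := (hcomp.image_of_continuousOn
      fun y hy => (hF y hy).continuousAt.continuousWithinAt).measure_lt_top.ne
    have := ENNReal.toReal_mono himage_fin hlow
    rwa [ENNReal.toReal_mul, ENNReal.toReal_ofReal (by positivity),
      finrank_euclideanSpace_fin] at this
  have hup := ContinuousLinearEquiv.abs_det_add_le (hDΘ x hx)
  rw [finrank_euclideanSpace_fin] at hup
  rw [(hF x hx).fderiv]
  exact le_inv_mul_div_pow_mul_of_le hc0 hc1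
    (ENNReal.toReal_pos hmeas.ne' hcomp.measure_lt_top.ne) hup hvol

/-- **Jacobian supremum bound via the measure of the image (curved simplices).**
If `F(x̂) = B·x̂ + b + Θ(x̂)` with `B` invertible and `Θ` of class `C¹` on an open set
containing the compact convex set `T̂` of positive measure, with
`‖DΘ(x̂) ∘ B⁻¹‖ ≤ c < 1` on `T̂`, then
`sup_{x̂ ∈ T̂} |det DF(x̂)| ≤ (1/meas T̂)·((1 + c)/(1 − c))^d·meas (F '' T̂)`. -/
theorem curved_simplex_jacobian_sup_le_measure_ratio
    {d : ℕ} (hd : 1 ≤ d)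
    (Tref : Set (EuclideanSpace ℝ (Fin d)))
    (hcomp : IsCompact Tref) (hconv : Convex ℝ Tref)
    (hmeas : 0 < volume Tref)
    (B : EuclideanSpace ℝ (Fin d) ≃L[ℝ] EuclideanSpace ℝ (Fin d))
    (b : EuclideanSpace ℝ (Fin d)) (c : ℝ) (hc0 : 0 ≤ c) (hc1 : c < 1)
    (Θ : EuclideanSpace ℝ (Fin d) → EuclideanSpace ℝ (Fin d))
    (U : Set (EuclideanSpace ℝ (Fin d))) (hUo : IsOpen U) (hTU : Tref ⊆ U)
    (hΘ : ContDiffOn ℝ 1 Θ U)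
    (hDΘ : ∀ x ∈ Tref,
      ‖(fderiv ℝ Θ x).comp
        (B.symm : EuclideanSpace ℝ (Fin d) →L[ℝ] EuclideanSpace ℝ (Fin d))‖ ≤ c) :
    ∀ x ∈ Tref,
      |LinearMap.det (fderiv ℝ (fun z => B z + b + Θ z) x).toLinearMap| ≤
        (volume Tref).toReal⁻¹ * ((1 + c) / (1 - c)) ^ d *
          (volume ((fun z => B z + b + Θ z) '' Tref)).toReal :=
  curved_simplex_jacobian_sup_le_measure_ratio_general Tref hcomp hconv hmeas B b c hc1 Θ U hUo hTU
    hΘ hDΘ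
end
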